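/- The restriction of the map f ↦ π(f) gives a bijection between N_0^{(r,n)}(n̲) (colored sequences with exactly n_j entries equal to j for each 0 ≤ j ≤ k, for a composition n̲ = (n_0,...,n_k) of n) and the quotient G^J = {γ ∈ G(r,n) : Des_G(γ) ⊆ {n_0, n_0+n_1, ..., n_0+...+n_{k−1}}}. -/

import Mathlib

open Finset

namespace Paper

/-- An element of `G(r,n) = ℤ_r ≀ S_n`: a pair (underlying permutation, color vector). -/
abbrev CPerm (r n : ℕ) := Equiv.Perm (Fin n) × (Fin n → Fin r)

/-- A colored sequence: values and colors. -/
abbrev CSeq (r n : ℕ) := (Fin n → ℕ) × (Fin n → Fin r)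

variable {r n : ℕ}

/-- The order on colored integers (value, color):
`n^{r-1} < ⋯ < n^1 < ⋯ < 1^{r-1} < ⋯ < 1^1 < 0 < 1 < ⋯ < n`.
`clt a b` means `a < b`. -/
def clt (a b : ℕ × ℕ) : Prop :=
  (0 < a.2 ∧ b.2 = 0) ∨
  (0 < a.2 ∧ 0 < b.2 ∧ (b.1 < a.1 ∨ (a.1 = b.1 ∧ b.2 < a.2))) ∨
  (a.2 = 0 ∧ b.2 = 0 ∧ a.1 < b.1)

instance (a b : ℕ × ℕ) : Decidable (clt a b) := by unfold clt; exact inferInstance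

/-- The colored entry of `γ` at (0-based) position `i`: value `σ(i)` (1-based) with its color. -/
def entry (γ : CPerm r n) (i : Fin n) : ℕ × ℕ := ((γ.1 i : ℕ) + 1, (γ.2 i : ℕ))

/-- Window value `γ(i)` for `i ∈ [0,n]` (1-based positions), with `γ(0) := 0`. -/
def wval (γ : CPerm r n) (i : ℕ) : ℕ × ℕ :=
  if h : 1 ≤ i ∧ i ≤ n then ((γ.1 ⟨i - 1, by omega⟩ : ℕ) + 1, (γ.2 ⟨i - 1, by omega⟩ : ℕ))
  else (0, 0)

/-- Descent set `Des_G(γ) = {i ∈ [0,n-1] : γ(i) > γ(i+1)}`, with `γ(0) := 0`. -/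
def DesG (γ : CPerm r n) : Finset ℕ :=
  (range n).filter fun i => clt (wval γ (i + 1)) (wval γ i)

def desG (γ : CPerm r n) : ℕ := (DesG γ).card

def majG (γ : CPerm r n) : ℕ := ∑ i ∈ DesG γ, i

def colG (γ : CPerm r n) : ℕ := ∑ i, (γ.2 i : ℕ)

/-- Number of inversions: pairs `i < j` with `γ(i) > γ(j)` in the colored order. -/
def invG (γ : CPerm r n) : ℕ :=
  ((univ : Finset (Fin n × Fin n)).filter fun p =>
    p.1 < p.2 ∧ clt (entry γ p.2) (entry γ p.1)).card

/-- Length `ℓ_G(γ) = inv(γ) + Σ_{c_i ≠ 0} (σ(i) + c_i - 1)` (σ(i) 1-based). -/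
def lenG (γ : CPerm r n) : ℕ :=
  invG γ + ∑ i ∈ univ.filter (fun i => (γ.2 i : ℕ) ≠ 0), ((γ.1 i : ℕ) + (γ.2 i : ℕ))

/-- Membership in `N_0^{(r,n)}`: a zero value has color 0. -/
def ValidSeq (f : CSeq r n) : Prop := ∀ i, f.1 i = 0 → (f.2 i : ℕ) = 0

/-- The defining property of `π(f) = γ = (c;σ)`:
`f_{σ(1)} ≤ … ≤ f_{σ(n)}`, `c_i(γ) = c_{σ(i)}(f)`, and `γ(i) < γ(i+1)` whenever
`f_{σ(i)} = f_{σ(i+1)}`. -/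
def isPi (f : CSeq r n) (γ : CPerm r n) : Prop :=
  (∀ i j : Fin n, i ≤ j → f.1 (γ.1 i) ≤ f.1 (γ.1 j)) ∧
  (∀ i, γ.2 i = f.2 (γ.1 i)) ∧
  (∀ i j : Fin n, (i : ℕ) + 1 = (j : ℕ) → f.1 (γ.1 i) = f.1 (γ.1 j) →
    clt (entry γ i) (entry γ j))

def maxf (f : CSeq r n) : ℕ := univ.sup f.1

def sumf (f : CSeq r n) : ℕ := ∑ i, f.1 i

/-- The partition `λ(f)` (relative to `γ = π(f)`), with values in `ℤ`:
`λ_i = f_{σ(i)} - #{j ∈ Des_G(γ) : j ≤ i-1}` (1-based `i`). -/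
def lamZ (f : CSeq r n) (γ : CPerm r n) (i : Fin n) : ℤ :=
  (f.1 (γ.1 i) : ℤ) - ((DesG γ).filter (· ≤ (i : ℕ))).card

/-- 1-based reading of an `n`-tuple, with value `0` at index `0` (and outside `[1,n]`). -/
def mval (μ : Fin n → ℕ) (i : ℕ) : ℕ :=
  if h : 1 ≤ i ∧ i ≤ n then μ ⟨i - 1, by omega⟩ else 0

/-- `μ` is `γ`-compatible: `μ_i < μ_{i+1}` for all `i ∈ Des_G(γ)` (with `μ_0 := 0`). -/
def compat (μ : Fin n → ℕ) (γ : CPerm r n) : Prop :=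
  ∀ i ∈ DesG γ, mval μ i < mval μ (i + 1)

/-- The skew inverse `γ̃⁻¹ = (c_{σ⁻¹(1)},…,c_{σ⁻¹(n)}; σ⁻¹)`. -/
def skewInv (γ : CPerm r n) : CPerm r n := (γ.1⁻¹, fun i => γ.2 (γ.1⁻¹ i))

/-- The group inverse: `γ⁻¹ = (c'; σ⁻¹)` with `c'_i = (r - c_{σ⁻¹(i)}) mod r`. -/
def cinv (γ : CPerm r n) : CPerm r n :=
  (γ.1⁻¹, fun i =>
    ⟨(r - (γ.2 (γ.1⁻¹ i) : ℕ)) % r,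
      Nat.mod_lt _ (Nat.lt_of_le_of_lt (Nat.zero_le _) (γ.2 (γ.1⁻¹ i)).isLt)⟩)

/-- The group law of `G(r,n)`: `(c;σ)·(d;τ) = ((d_i + c_{τ(i)}) mod r; στ)`. -/
def cmul (x y : CPerm r n) : CPerm r n :=
  (x.1 * y.1, fun i =>
    ⟨((y.2 i : ℕ) + (x.2 (y.1 i) : ℕ)) % r,
      Nat.mod_lt _ (Nat.lt_of_le_of_lt (Nat.zero_le _) (y.2 i).isLt)⟩)

/-- The color-forgetting projection `φ : G(r,n) → B_n = G(2,n)`. -/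
def phi (γ : CPerm r n) : CPerm 2 n := (γ.1, fun i => ⟨min (γ.2 i : ℕ) 1, by omega⟩)

/-- `[m]_p = 1 + p + ⋯ + p^{m-1}`. -/
def qint {R : Type*} [CommRing R] (p : R) (m : ℕ) : R := ∑ j ∈ range m, p ^ j

/-- `[m]_p! = [1]_p [2]_p ⋯ [m]_p`. -/
def qfact {R : Type*} [CommRing R] (p : R) (m : ℕ) : R := ∏ j ∈ range m, qint p (j + 1)

/-- `[m̂]_{b,p}! = (1+bp)(1+bp²)⋯(1+bp^m)·[m]_p!`. -/
def hqfact {R : Type*} [CommRing R] (b p : R) (m : ℕ) : R :=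
  (∏ i ∈ range m, (1 + b * p ^ (i + 1))) * qfact p m

/-- A formal power series in two variables `X 0, X 1` from its coefficients. -/
def seriesOf2 (F : ℕ → ℕ → ℚ) : MvPowerSeries (Fin 2) ℚ := fun d => F (d 0) (d 1)

/-- A formal power series in three variables from its coefficients. -/
def seriesOf3 (F : ℕ → ℕ → ℕ → ℚ) : MvPowerSeries (Fin 3) ℚ := fun d => F (d 0) (d 1) (d 2)

/-!
Write `γ = π(f) = (c;σ)`. The sequence `f ∘ σ` is weakly increasing with `n_j` entries equal
to `j`, so it is the fixed sequence `0^{n_0} 1^{n_1} ⋯ k^{n_k}`; together with `c_i = c_{σ(i)}(f)`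
this recovers `f` from `γ`. A descent of `γ` at `i > 0` forces `f_{σ(i)} < f_{σ(i+1)}`, and a
descent at `0` forces a nonzero colour, hence `f_{σ(1)} > 0`: either way `i` is a block boundary
`n_0 + ⋯ + n_m`. Conversely, for `γ ∈ G^J` spread `0^{n_0} ⋯ k^{n_k}` along `σ` with the colours
of `γ`: inside a block there is no descent, so `γ` increases there, and before the first boundary
there is no descent, so the colours vanish where the value does.
-/

lemma clt_asymm {a b : ℕ × ℕ} (h : clt a b) : ¬ clt b a := by
  unfold clt at *; omega

lemma clt_or_clt_of_fst_ne {a b : ℕ × ℕ} (h : a.1 ≠ b.1) : clt a b ∨ clt b a := by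
  unfold clt; omega

lemma clt_zero_iff (a : ℕ × ℕ) : clt a (0, 0) ↔ 0 < a.2 := by
  unfold clt; omega

lemma wval_zero (γ : CPerm r n) : wval γ 0 = (0, 0) := by
  simp [wval]

lemma wval_succ (γ : CPerm r n) {i : ℕ} (h : i < n) : wval γ (i + 1) = entry γ ⟨i, h⟩ := by
  simp [wval, entry, show i + 1 ≤ n by omega]

lemma mem_DesG_iff {γ : CPerm r n} {i : ℕ} :
    i ∈ DesG γ ↔ i < n ∧ clt (wval γ (i + 1)) (wval γ i) := by
  simp [DesG]

lemma color_eq_zero_of_forall_not_mem_DesG (γ : CPerm r n) (x : Fin n)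
    (h : ∀ i ≤ (x : ℕ), i ∉ DesG γ) : (γ.2 x : ℕ) = 0 := by
  obtain ⟨p, hp⟩ := x
  simp only at h
  induction p with
  | zero =>
    simpa [mem_DesG_iff, hp, wval_zero, wval_succ, clt_zero_iff, entry] using h 0 le_rfl
  | succ p ih =>
    have hprev := ih (by omega) fun i hi => h i (by omega)
    have hasc := h (p + 1) le_rfl
    simp only [mem_DesG_iff, hp, true_and, wval_succ γ hp, wval_succ γ (Nat.lt_of_succ_lt hp)]
      at hasc
    unfold clt entry at hasc
    simp only at hprev hasc
    omega

lemma clt_entry_of_succ_not_mem_DesG (γ : CPerm r n) {a b : Fin n} (hab : (a : ℕ) + 1 = b)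
    (h : (a : ℕ) + 1 ∉ DesG γ) : clt (entry γ a) (entry γ b) := by
  have hne : (entry γ a).1 ≠ (entry γ b).1 := by
    simp only [entry, ne_eq, add_left_inj, Fin.val_inj, EmbeddingLike.apply_eq_iff_eq]
    rintro rfl
    omega
  refine (clt_or_clt_of_fst_ne hne).resolve_right fun hdes => h ?_
  have hb : (⟨(a : ℕ) + 1, hab ▸ b.2⟩ : Fin n) = b := Fin.ext hab
  rw [mem_DesG_iff, wval_succ γ (hab ▸ b.2), wval_succ γ a.2, hb]
  exact ⟨hab ▸ b.2, hdes⟩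

lemma mval_zero (μ : Fin n → ℕ) : mval μ 0 = 0 := by
  simp [mval]

lemma mval_succ (μ : Fin n → ℕ) {i : ℕ} (h : i < n) : mval μ (i + 1) = μ ⟨i, h⟩ := by
  simp [mval, show i + 1 ≤ n by omega]

lemma mval_mono {μ : Fin n → ℕ} (hμ : Monotone μ) {i j : ℕ} (hij : i ≤ j) (hj : j ≤ n) :
    mval μ i ≤ mval μ j := by
  unfold mval
  split_ifs
  · exact hμ (Fin.mk_le_mk.mpr (by omega))
  · omega
  · exact Nat.zero_le _
  · exact le_rfl

lemma card_filter_lt_eq_sum_card_filter_eq {α : Type*} [Fintype α] (g : α → ℕ) (j : ℕ) :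
    #{x | g x < j} = ∑ t ∈ range j, #{x | g x = t} := by
  rw [card_eq_sum_card_fiberwise (f := g) (t := range j) fun x hx => by simpa using hx]
  simp only [filter_filter]
  refine sum_congr rfl fun t ht => congrArg card (filter_congr fun x _ => ?_)
  have := mem_range.mp ht
  constructor <;> rintro ⟨-, rfl⟩ <;> trivial

lemma lt_iff_lt_card_filter_lt_of_monotone {g : Fin n → ℕ} (hg : Monotone g) (j : ℕ) (x : Fin n) :
    g x < j ↔ (x : ℕ) < #{y | g y < j} :=
  (Fin.lt_card_filter_univ_iff_apply_of_imp (fun y => g y < j)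
    fun _ _ h hy => (hg h).trans_lt hy).symm

lemma card_filter_comp_perm {α : Type*} [Fintype α] (σ : Equiv.Perm α) (p : α → Prop)
    [DecidablePred p] : #{x | p (σ x)} = #{x | p x} :=
  card_equiv σ (by simp)

def blockStart (nc : ℕ → ℕ) (j : ℕ) : ℕ := ∑ t ∈ range j, nc t

lemma blockStart_mono (nc : ℕ → ℕ) : Monotone (blockStart nc) :=
  fun _ _ h => sum_le_sum_of_subset (range_subset_range.mpr h)

/-- Characterises the sequence `0^{n_0} 1^{n_1} ⋯ k^{n_k}` (where `n_j = nc j`). -/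
def HasBlocks (nc : ℕ → ℕ) (k : ℕ) (g : Fin n → ℕ) : Prop :=
  ∀ j ≤ k + 1, ∀ x : Fin n, g x < j ↔ (x : ℕ) < blockStart nc j

/-- The entry at 1-based position `i` of `0^{n_0} 1^{n_1} ⋯ k^{n_k}`, and `0` at position `0`
as in `mval`. -/
def blockOf (nc : ℕ → ℕ) (k i : ℕ) : ℕ := #{m : Fin k | blockStart nc (m + 1) < i}

section Blocks

variable {nc : ℕ → ℕ} {k : ℕ}

lemma hasBlocks_of_monotone {g : Fin n → ℕ} (hg : Monotone g)
    (hcnt : ∀ j ≤ k, #{x | g x = j} = nc j) : HasBlocks nc k g := by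
  intro j hj x
  rw [lt_iff_lt_card_filter_lt_of_monotone hg, card_filter_lt_eq_sum_card_filter_eq, blockStart,
    sum_congr rfl fun t ht => hcnt t (by have := mem_range.mp ht; omega)]

lemma HasBlocks.le {g : Fin n → ℕ} (hg : HasBlocks nc k g) (hn : blockStart nc (k + 1) = n)
    (x : Fin n) : g x ≤ k :=
  Nat.lt_succ_iff.mp ((hg (k + 1) le_rfl x).mpr (hn ▸ x.2))

lemma HasBlocks.unique {g g' : Fin n → ℕ} (hg : HasBlocks nc k g) (hg' : HasBlocks nc k g')
    (hn : blockStart nc (k + 1) = n) : g = g' := by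
  funext x
  have hx := hg.le hn x
  have hx' := hg'.le hn x
  have h := hg (g x + 1) (by omega) x
  have h' := hg' (g x + 1) (by omega) x
  have h'' := hg (g' x + 1) (by omega) x
  have h''' := hg' (g' x + 1) (by omega) x
  omega

lemma HasBlocks.card_filter_eq {g : Fin n → ℕ} (hg : HasBlocks nc k g)
    (hn : blockStart nc (k + 1) = n) {j : ℕ} (hj : j ≤ k) : #{x | g x = j} = nc j := by
  have hlt : ∀ i ≤ k + 1, #{x | g x < i} = blockStart nc i := fun i hi => by
    rw [filter_congr fun x _ => hg i hi x, Fin.card_filter_val_lt]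
    exact min_eq_right (hn ▸ blockStart_mono nc hi)
  have hsum := card_filter_lt_eq_sum_card_filter_eq g (j + 1)
  rw [sum_range_succ, ← card_filter_lt_eq_sum_card_filter_eq, hlt _ (by omega),
    hlt _ (by omega), blockStart, blockStart, sum_range_succ] at hsum
  omega

lemma lt_blockOf_iff {m : ℕ} (hm : m < k) (i : ℕ) :
    m < blockOf nc k i ↔ blockStart nc (m + 1) < i :=
  Fin.lt_card_filter_univ_iff_apply_of_imp (j := ⟨m, hm⟩)
    (fun m : Fin k => blockStart nc (m + 1) < i)
    fun _ _ h hi => (blockStart_mono nc (Nat.succ_le_succ h)).trans_lt hi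

lemma blockOf_le (i : ℕ) : blockOf nc k i ≤ k :=
  (card_filter_le _ _).trans_eq (card_fin k)

lemma blockOf_zero : blockOf nc k 0 = 0 := by
  simp [blockOf]

lemma blockOf_mono : Monotone (blockOf nc k) :=
  fun _ _ h => card_le_card fun m hm => by
    simp only [mem_filter] at hm ⊢
    exact ⟨hm.1, hm.2.trans_le h⟩

lemma blockOf_lt_blockOf_succ_iff (i : ℕ) :
    blockOf nc k i < blockOf nc k (i + 1) ↔
      i ∈ (range k).image fun m => blockStart nc (m + 1) := by
  simp only [mem_image, mem_range]
  constructor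
  · intro h
    have hm : blockOf nc k i < k := h.trans_le (blockOf_le _)
    have h1 := (lt_blockOf_iff hm (i + 1)).mp h
    have h2 := (lt_blockOf_iff hm i).not.mp (lt_irrefl _)
    exact ⟨_, hm, by omega⟩
  · rintro ⟨m, hm, rfl⟩
    have h1 := (lt_blockOf_iff (nc := nc) hm (blockStart nc (m + 1) + 1)).mpr (by omega)
    have h2 := (lt_blockOf_iff (nc := nc) hm (blockStart nc (m + 1))).not.mpr (lt_irrefl _)
    omega

lemma hasBlocks_blockOf (hn : blockStart nc (k + 1) = n) :
    HasBlocks nc k fun x : Fin n => blockOf nc k (x + 1) := by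
  rintro (_ | m) hm x
  · simp [blockStart]
  rcases (Nat.succ_le_succ_iff.mp hm).lt_or_eq with hm | rfl
  · rw [← not_iff_not, not_lt, not_lt, Nat.succ_le_iff, lt_blockOf_iff hm, Nat.lt_succ_iff]
  · simpa [hn, Nat.lt_succ_iff] using blockOf_le (x + 1)

lemma mval_eq_blockOf {μ : Fin n → ℕ} (hμ : ∀ x : Fin n, μ x = blockOf nc k (x + 1)) {i : ℕ}
    (hi : i ≤ n) : mval μ i = blockOf nc k i := by
  rcases i with _ | i
  · rw [mval_zero, blockOf_zero]
  · rw [mval_succ μ hi, hμ]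

lemma compat_iff_of_eq_blockOf {γ : CPerm r n} {μ : Fin n → ℕ}
    (hμ : ∀ x : Fin n, μ x = blockOf nc k (x + 1)) :
    compat μ γ ↔ ∀ i ∈ DesG γ, i ∈ (range k).image fun m => blockStart nc (m + 1) := by
  refine forall₂_congr fun i hi => ?_
  have hin := (mem_DesG_iff.mp hi).1
  rw [mval_eq_blockOf hμ hin.le, mval_eq_blockOf hμ hin, blockOf_lt_blockOf_succ_iff]

end Blocks

section IsPi

variable {f f' : CSeq r n} {γ : CPerm r n}

lemma isPi.monotone (h : isPi f γ) : Monotone fun x => f.1 (γ.1 x) :=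
  fun _ _ hxy => h.1 _ _ hxy

lemma isPi.compat (hf : ValidSeq f) (h : isPi f γ) : compat (fun x => f.1 (γ.1 x)) γ := by
  intro i hi
  obtain ⟨hin, hdes⟩ := mem_DesG_iff.mp hi
  rcases i with _ | i
  · rw [wval_zero, clt_zero_iff, wval_succ γ hin, entry, h.2.1] at hdes
    have hval : f.1 (γ.1 ⟨0, hin⟩) ≠ 0 := fun h0 => by simp [hf _ h0] at hdes
    rw [mval_zero, mval_succ _ hin]
    exact Nat.pos_of_ne_zero hval
  · rw [wval_succ γ hin, wval_succ γ (Nat.lt_of_succ_lt hin)] at hdes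
    have hle := h.1 ⟨i, by omega⟩ ⟨i + 1, hin⟩ (Fin.mk_le_mk.mpr i.le_succ)
    have hne : f.1 (γ.1 ⟨i, by omega⟩) ≠ f.1 (γ.1 ⟨i + 1, hin⟩) := fun heq =>
      clt_asymm (h.2.2 _ _ rfl heq) hdes
    rw [mval_succ _ (Nat.lt_of_succ_lt hin), mval_succ _ hin]
    exact lt_of_le_of_ne hle hne

lemma isPi.apply_eq_blockOf {nc : ℕ → ℕ} {k : ℕ} (h : isPi f γ)
    (hcnt : ∀ j ≤ k, #{y | f.1 y = j} = nc j) (hn : blockStart nc (k + 1) = n) (x : Fin n) :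
    f.1 (γ.1 x) = blockOf nc k (x + 1) := by
  have hblocks : HasBlocks nc k fun x => f.1 (γ.1 x) :=
    hasBlocks_of_monotone h.monotone fun j hj => by
      rw [card_filter_comp_perm γ.1 (fun y => f.1 y = j), hcnt j hj]
  exact congrFun (hblocks.unique (hasBlocks_blockOf hn) hn) x

lemma eq_of_isPi (h : isPi f γ) (h' : isPi f' γ) (hval : ∀ x, f.1 (γ.1 x) = f'.1 (γ.1 x)) :
    f = f' := by
  refine Prod.ext (funext fun y => ?_) (funext fun y => ?_)
  · simpa using hval (γ.1⁻¹ y)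
  · simpa using (h.2.1 (γ.1⁻¹ y)).symm.trans (h'.2.1 (γ.1⁻¹ y))

end IsPi

def seqOfPerm (γ : CPerm r n) (g : Fin n → ℕ) : CSeq r n :=
  (fun y => g (γ.1⁻¹ y), fun y => γ.2 (γ.1⁻¹ y))

section SeqOfPerm

variable {γ : CPerm r n} {g : Fin n → ℕ}

lemma isPi_seqOfPerm (hg : Monotone g) (hγ : compat g γ) : isPi (seqOfPerm γ g) γ := by
  refine ⟨fun a b hab => by simpa [seqOfPerm] using hg hab, fun x => by simp [seqOfPerm],
    fun a b hab heq => clt_entry_of_succ_not_mem_DesG γ hab fun hdes => ?_⟩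
  have hlt := hγ _ hdes
  rw [mval_succ g a.2, mval_succ g (hab ▸ b.2), show (⟨a + 1, _⟩ : Fin n) = b from Fin.ext hab]
    at hlt
  simp only [seqOfPerm] at heq
  simpa using hlt.ne (by simpa using heq)

lemma validSeq_seqOfPerm (hg : Monotone g) (hγ : compat g γ) : ValidSeq (seqOfPerm γ g) := by
  refine fun y hy => color_eq_zero_of_forall_not_mem_DesG γ _ fun i hi hdes => ?_
  have hlt := (hγ i hdes).trans_le (mval_mono hg (Nat.succ_le_succ hi) (γ.1⁻¹ y).2)
  rw [mval_succ g (γ.1⁻¹ y).2] at hlt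
  exact ((Nat.zero_le _).trans_lt hlt).ne' hy

end SeqOfPerm

theorem stmt11_general (r n k : ℕ)
    (nc : ℕ → ℕ) (hnc : ∑ j ∈ range (k + 1), nc j = n)
    (π : CSeq r n → CPerm r n)
    (hπ : ∀ f, ValidSeq f → isPi f (π f) ∧ ∀ γ, isPi f γ → γ = π f) :
    Set.BijOn π
      {f : CSeq r n | ValidSeq f ∧ (∀ i, f.1 i ≤ k) ∧
        ∀ j ≤ k, (univ.filter fun i => f.1 i = j).card = nc j}
      {γ : CPerm r n | ∀ i ∈ DesG γ,
        i ∈ (range k).image fun m => ∑ j ∈ range (m + 1), nc j} := by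
  have hn : blockStart nc (k + 1) = n := hnc
  refine ⟨?_, ?_, ?_⟩
  · rintro f ⟨hf, -, hcnt⟩
    have hpi := (hπ f hf).1
    exact (compat_iff_of_eq_blockOf (hpi.apply_eq_blockOf hcnt hn)).mp (hpi.compat hf)
  · rintro f ⟨hf, -, hcnt⟩ f' ⟨hf', -, hcnt'⟩ heq
    have hpi' : isPi f' (π f) := heq ▸ (hπ f' hf').1
    exact eq_of_isPi (hπ f hf).1 hpi' fun x => by
      rw [(hπ f hf).1.apply_eq_blockOf hcnt hn, hpi'.apply_eq_blockOf hcnt' hn]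
  · intro γ hγ
    set μ : Fin n → ℕ := fun x => blockOf nc k (x + 1)
    have hμ : Monotone μ := fun _ _ h => blockOf_mono (Nat.succ_le_succ h)
    have hcompat : compat μ γ := (compat_iff_of_eq_blockOf fun _ => rfl).mpr hγ
    have hf := validSeq_seqOfPerm hμ hcompat
    refine ⟨seqOfPerm γ μ, ⟨hf, fun _ => blockOf_le _, fun j hj => ?_⟩,
      ((hπ _ hf).2 γ (isPi_seqOfPerm hμ hcompat)).symm⟩
    rw [← card_filter_comp_perm γ.1]
    simpa [seqOfPerm] using (hasBlocks_blockOf hn).card_filter_eq hn hj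

/-- equation (4.13): the restriction of `f ↦ π(f)` is a bijection between
`N_0^{(r,n)}(n̲)` and the quotient
`G^J = {γ ∈ G(r,n) : Des_G(γ) ⊆ {n_0, n_0+n_1, …, n_0+⋯+n_{k−1}}}`. -/
theorem stmt11 (r n k : ℕ) (hr : 0 < r)
    (nc : ℕ → ℕ) (hnc : ∑ j ∈ range (k + 1), nc j = n)
    (π : CSeq r n → CPerm r n)
    (hπ : ∀ f, ValidSeq f → isPi f (π f) ∧ ∀ γ, isPi f γ → γ = π f) :
    Set.BijOn π
      {f : CSeq r n | ValidSeq f ∧ (∀ i, f.1 i ≤ k) ∧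
        ∀ j ≤ k, (univ.filter fun i => f.1 i = j).card = nc j}
      {γ : CPerm r n | ∀ i ∈ DesG γ,
        i ∈ (range k).image fun m => ∑ j ∈ range (m + 1), nc j} :=
  stmt11_general r n k nc hnc π hπ

end Paper
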